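/- arXiv:2511.19410 — 3 statements merged into one kernel-verified Lean document; each statement's English description precedes it below -/
import Mathlib

section
/- Let C be a preadditive category, let A and B be objects of C, and let n be a positive integer such that the n-fold biproducts A^{⊕n} = ⨁_{i<n} A and B^{⊕n} = ⨁_{i<n} B exist in C. Assume: (i) the ring homomorphism ℤ → End(A) sending k to k·id_A is bijective; (ii) there exists a morphism φ : A → B such that every morphism f : A → B equals k·φ for some integer k; (iii) there exists a morphism ψ : B → A such that every morphism g : B → A equals k·ψ for some integer k; (iv) A^{⊕n} and B^{⊕n} are isomorphic in C. Then A and B are isomorphic in C. -/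
open CategoryTheory CategoryTheory.Limits

/-- Lemma 7.4 (categorical form): in a preadditive category, if `End(A) = ℤ`,
`Hom(A,B)` and `Hom(B,A)` are cyclic as `ℤ`-modules, and `A^{⊕n} ≅ B^{⊕n}` for
some `n ≥ 1`, then `A ≅ B`. -/
theorem stmt1 {C : Type*} [Category C] [Preadditive C] (A B : C) (n : ℕ) (hn : 0 < n)
    [HasBiproduct (fun _ : Fin n => A)] [HasBiproduct (fun _ : Fin n => B)]
    (h1 : Function.Bijective (fun m : ℤ => (m • 𝟙 A : A ⟶ A)))
    (h2 : ∃ φ : A ⟶ B, ∀ f : A ⟶ B, ∃ m : ℤ, f = m • φ)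
    (h3 : ∃ ψ : B ⟶ A, ∀ f : B ⟶ A, ∃ m : ℤ, f = m • ψ)
    (h4 : Nonempty ((⨁ fun _ : Fin n => A) ≅ ⨁ fun _ : Fin n => B)) :
    Nonempty (A ≅ B) := by
  obtain ⟨φ, hφ⟩ := h2
  obtain ⟨ψ, hψ⟩ := h3
  obtain ⟨e⟩ := h4
  obtain ⟨m, hm⟩ := h1.2 (φ ≫ ψ)
  simp only at hm
  choose a ha using fun i j =>
    hφ (biproduct.ι (fun _ : Fin n => A) i ≫ e.hom ≫ biproduct.π (fun _ : Fin n => B) j)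
  choose b hb using fun i j =>
    hψ (biproduct.ι (fun _ : Fin n => B) i ≫ e.inv ≫ biproduct.π (fun _ : Fin n => A) j)
  -- A-side computation
  have expandA : ∀ i j : Fin n,
      biproduct.ι (fun _ : Fin n => A) i ≫ (e.hom ≫ e.inv) ≫ biproduct.π (fun _ : Fin n => A) j
        = (∑ k, a i k * b k j) • (φ ≫ ψ) := by
    intro i j
    have : e.hom ≫ e.inv
        = e.hom ≫ (∑ k, biproduct.π (fun _ : Fin n => B) k ≫ biproduct.ι (fun _ : Fin n => B) k) ≫ e.inv := by
      rw [biproduct.total]; simp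
    rw [this]
    simp only [Preadditive.sum_comp, Preadditive.comp_sum, Category.assoc, Finset.sum_smul]
    refine Finset.sum_congr rfl fun k _ => ?_
    have h1' := ha i k
    have h2' := hb k j
    calc biproduct.ι (fun _ : Fin n => A) i ≫ e.hom ≫ biproduct.π (fun _ : Fin n => B) k ≫
          biproduct.ι (fun _ : Fin n => B) k ≫ e.inv ≫ biproduct.π (fun _ : Fin n => A) j
        = (biproduct.ι (fun _ : Fin n => A) i ≫ e.hom ≫ biproduct.π (fun _ : Fin n => B) k) ≫
          (biproduct.ι (fun _ : Fin n => B) k ≫ e.inv ≫ biproduct.π (fun _ : Fin n => A) j) := by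
          simp [Category.assoc]
      _ = (a i k • φ) ≫ (b k j • ψ) := by rw [← h1', ← h2']
      _ = (a i k * b k j) • (φ ≫ ψ) := by
          rw [Preadditive.zsmul_comp, Preadditive.comp_zsmul, smul_smul, mul_comm]
  have expandB : ∀ i j : Fin n,
      biproduct.ι (fun _ : Fin n => B) i ≫ (e.inv ≫ e.hom) ≫ biproduct.π (fun _ : Fin n => B) j
        = (∑ k, b i k * a k j) • (ψ ≫ φ) := by
    intro i j
    have : e.inv ≫ e.hom
        = e.inv ≫ (∑ k, biproduct.π (fun _ : Fin n => A) k ≫ biproduct.ι (fun _ : Fin n => A) k) ≫ e.hom := by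
      rw [biproduct.total]; simp
    rw [this]
    simp only [Preadditive.sum_comp, Preadditive.comp_sum, Category.assoc, Finset.sum_smul]
    refine Finset.sum_congr rfl fun k _ => ?_
    have h1' := hb i k
    have h2' := ha k j
    calc biproduct.ι (fun _ : Fin n => B) i ≫ e.inv ≫ biproduct.π (fun _ : Fin n => A) k ≫
          biproduct.ι (fun _ : Fin n => A) k ≫ e.hom ≫ biproduct.π (fun _ : Fin n => B) j
        = (biproduct.ι (fun _ : Fin n => B) i ≫ e.inv ≫ biproduct.π (fun _ : Fin n => A) k) ≫
          (biproduct.ι (fun _ : Fin n => A) k ≫ e.hom ≫ biproduct.π (fun _ : Fin n => B) j) := by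
          simp [Category.assoc]
      _ = (b i k • ψ) ≫ (a k j • φ) := by rw [← h1', ← h2']
      _ = (b i k * a k j) • (ψ ≫ φ) := by
          rw [Preadditive.zsmul_comp, Preadditive.comp_zsmul, smul_smul, mul_comm]
  -- integer matrix equation from A-side
  have intEq : ∀ i j : Fin n,
      (∑ k, a i k * b k j) * m = if i = j then 1 else 0 := by
    intro i j
    apply h1.1
    simp only []
    have hA := expandA i j
    rw [← hm] at hA
    have hδ : biproduct.ι (fun _ : Fin n => A) i ≫ (e.hom ≫ e.inv) ≫
        biproduct.π (fun _ : Fin n => A) j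
        = (if i = j then (1:ℤ) else 0) • 𝟙 A := by
      rw [e.hom_inv_id]
      by_cases h : i = j
      · subst h; simp
      · simp [biproduct.ι_π_ne _ h, h]
    rw [hδ] at hA
    simpa [smul_smul] using hA.symm
  -- matrices
  set Ma : Matrix (Fin n) (Fin n) ℤ := Matrix.of a with hMa
  set Mb : Matrix (Fin n) (Fin n) ℤ := Matrix.of b with hMb
  have hAB : Ma * (m • Mb) = 1 := by
    ext i j
    have := intEq i j
    simp only [Matrix.mul_apply, Matrix.smul_apply, Matrix.one_apply, hMa, hMb, Matrix.of_apply,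
      smul_eq_mul]
    calc (∑ k, a i k * (m * b k j)) = (∑ k, a i k * b k j) * m := by
          rw [Finset.sum_mul]; exact Finset.sum_congr rfl fun k _ => by ring
      _ = if i = j then 1 else 0 := this
  have hBA : (m • Mb) * Ma = 1 := mul_eq_one_comm.mp hAB
  set i0 : Fin n := ⟨0, hn⟩
  have hc : m * (∑ k, b i0 k * a k i0) = 1 := by
    have := congrFun (congrFun hBA i0) i0
    simp only [Matrix.mul_apply, Matrix.smul_apply, Matrix.one_apply_eq, hMa, hMb,
      Matrix.of_apply, smul_eq_mul] at this
    calc m * (∑ k, b i0 k * a k i0) = ∑ k, m * b i0 k * a k i0 := by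
          rw [Finset.mul_sum]; exact Finset.sum_congr rfl fun k _ => by ring
      _ = 1 := this
  -- m is ±1
  have hm2 : m * m = 1 := by
    have : IsUnit m := IsUnit.of_mul_eq_one _ hc
    rcases Int.isUnit_iff.mp this with h | h <;> simp [h]
  have hceq : (∑ k, b i0 k * a k i0) = m := by
    calc (∑ k, b i0 k * a k i0) = (∑ k, b i0 k * a k i0) * (m * m) := by rw [hm2, mul_one]
      _ = (m * (∑ k, b i0 k * a k i0)) * m := by ring
      _ = m := by rw [hc, one_mul]
  -- B-side gives inverse
  have keyB : (∑ k, b i0 k * a k i0) • (ψ ≫ φ) = 𝟙 B := by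
    have hB := expandB i0 i0
    rw [e.inv_hom_id] at hB
    simpa using hB.symm
  refine ⟨⟨φ, m • ψ, ?_, ?_⟩⟩
  · rw [Preadditive.comp_zsmul, ← hm, smul_smul, hm2, one_smul]
  · rw [Preadditive.zsmul_comp, ← hceq, keyB]
end

section
/- Let g and r be positive integers. The reduction-modulo-r map on symplectic groups is surjective: for every 2g×2g matrix M̄ over ℤ/rℤ belonging to the symplectic group Sp_{2g}(ℤ/rℤ) = { M : M · J · Mᵀ = J } (J the standard symplectic Gram matrix of size 2g, with blocks 0, −I_g, I_g, 0), there exists a matrix M ∈ Sp_{2g}(ℤ) whose entrywise reduction modulo r equals M̄. -/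
open Matrix

namespace Sp5

variable {R : Type*} [CommRing R] {g : ℕ}

/-- The standard symplectic form on row vectors. -/
def B (x y : Fin g ⊕ Fin g → R) : R :=
  ∑ i, (x (Sum.inr i) * y (Sum.inl i) - x (Sum.inl i) * y (Sum.inr i))

/-- `J` applied to a column vector. -/
def Jv (v : Fin g ⊕ Fin g → R) : Fin g ⊕ Fin g → R :=
  Sum.elim (fun i => -v (Sum.inr i)) (fun i => v (Sum.inl i))

/-- standard basis row vector -/
def E (i : Fin g ⊕ Fin g) : Fin g ⊕ Fin g → R := fun j => if i = j then 1 else 0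

/-- symplectic transvection along `v` with parameter `t` -/
def T (v : Fin g ⊕ Fin g → R) (t : R) : Matrix (Fin g ⊕ Fin g) (Fin g ⊕ Fin g) R :=
  1 + t • vecMulVec (Jv v) v

lemma B_self (x : Fin g ⊕ Fin g → R) : B x x = 0 := by
  simp [B, mul_comm]

lemma B_skew (x y : Fin g ⊕ Fin g → R) : B x y = -B y x := by
  simp only [B, ← Finset.sum_neg_distrib]
  exact Finset.sum_congr rfl fun i _ => by ring

lemma B_add_left (x y z : Fin g ⊕ Fin g → R) : B (x + y) z = B x z + B y z := by
  simp only [B, Pi.add_apply, ← Finset.sum_add_distrib]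
  exact Finset.sum_congr rfl fun i _ => by ring

lemma B_add_right (x y z : Fin g ⊕ Fin g → R) : B x (y + z) = B x y + B x z := by
  simp only [B, Pi.add_apply, ← Finset.sum_add_distrib]
  exact Finset.sum_congr rfl fun i _ => by ring

lemma B_neg_right (x y : Fin g ⊕ Fin g → R) : B x (-y) = -B x y := by
  simp only [B, Pi.neg_apply, ← Finset.sum_neg_distrib]
  exact Finset.sum_congr rfl fun i _ => by ring

lemma B_sub_right (x y z : Fin g ⊕ Fin g → R) : B x (y - z) = B x y - B x z := by
  rw [sub_eq_add_neg, B_add_right, B_neg_right, sub_eq_add_neg]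

lemma B_sub_left (x y z : Fin g ⊕ Fin g → R) : B (x - y) z = B x z - B y z := by
  rw [B_skew, B_sub_right, B_skew x z, B_skew y z]; ring

lemma dot_Jv (x v : Fin g ⊕ Fin g → R) : x ⬝ᵥ Jv v = B x v := by
  simp only [dotProduct, Jv, B, Fintype.sum_sum_type, Sum.elim_inl, Sum.elim_inr]
  rw [← Finset.sum_add_distrib]; exact Finset.sum_congr rfl fun i _ => by ring

lemma B_E_inl_right (x : Fin g ⊕ Fin g → R) (k : Fin g) : B x (E (Sum.inl k)) = x (Sum.inr k) := by
  simp [B, E, Sum.inl.injEq, mul_ite, Finset.sum_sub_distrib]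

lemma B_E_inr_right (x : Fin g ⊕ Fin g → R) (k : Fin g) : B x (E (Sum.inr k)) = -x (Sum.inl k) := by
  simp [B, E, Sum.inr.injEq, mul_ite, Finset.sum_sub_distrib]

lemma B_E_inl_left (y : Fin g ⊕ Fin g → R) (k : Fin g) : B (E (Sum.inl k)) y = -y (Sum.inr k) := by
  rw [B_skew, B_E_inl_right]

lemma B_E_inr_left (y : Fin g ⊕ Fin g → R) (k : Fin g) : B (E (Sum.inr k)) y = y (Sum.inl k) := by
  rw [B_skew, B_E_inr_right, neg_neg]

-- J interface
lemma J_mulVec (v : Fin g ⊕ Fin g → R) : (Matrix.J (Fin g) R).mulVec v = Jv v := by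
  funext i
  cases i with
  | inl a => simp [Matrix.J, Matrix.mulVec, dotProduct, Fintype.sum_sum_type,
      Matrix.fromBlocks, Jv, Matrix.one_apply]
  | inr a => simp [Matrix.J, Matrix.mulVec, dotProduct, Fintype.sum_sum_type,
      Matrix.fromBlocks, Jv, Matrix.one_apply]

lemma vecMul_J (v : Fin g ⊕ Fin g → R) : vecMul v (Matrix.J (Fin g) R) = -Jv v := by
  funext j
  cases j with
  | inl a => simp [Matrix.J, Matrix.vecMul, dotProduct, Fintype.sum_sum_type,
      Matrix.fromBlocks, Jv, Matrix.one_apply]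
  | inr a => simp [Matrix.J, Matrix.vecMul, dotProduct, Fintype.sum_sum_type,
      Matrix.fromBlocks, Jv, Matrix.one_apply]

lemma J_apply_inl_inl (i j : Fin g) : Matrix.J (Fin g) R (Sum.inl i) (Sum.inl j) = 0 := by
  simp [Matrix.J, Matrix.fromBlocks]
lemma J_apply_inr_inr (i j : Fin g) : Matrix.J (Fin g) R (Sum.inr i) (Sum.inr j) = 0 := by
  simp [Matrix.J, Matrix.fromBlocks]
lemma J_apply_inl_inr (i j : Fin g) :
    Matrix.J (Fin g) R (Sum.inl i) (Sum.inr j) = -(if i = j then 1 else 0) := by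
  simp [Matrix.J, Matrix.fromBlocks, Matrix.one_apply]
lemma J_apply_inr_inl (i j : Fin g) :
    Matrix.J (Fin g) R (Sum.inr i) (Sum.inl j) = if i = j then 1 else 0 := by
  simp [Matrix.J, Matrix.fromBlocks, Matrix.one_apply]

-- vecMulVec algebra
lemma vecMul_vecMulVec (x a v : Fin g ⊕ Fin g → R) :
    vecMul x (vecMulVec a v) = (x ⬝ᵥ a) • v := by
  funext j
  simp only [Matrix.vecMul, vecMulVec_apply, dotProduct, Pi.smul_apply, smul_eq_mul,
    Fintype.sum_sum_type, add_mul, Finset.sum_mul]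
  refine congrArg₂ (· + ·) ?_ ?_ <;> exact Finset.sum_congr rfl fun k _ => by ring

lemma vecMulVec_mul_mat (a v : Fin g ⊕ Fin g → R) (N : Matrix (Fin g ⊕ Fin g) (Fin g ⊕ Fin g) R) :
    vecMulVec a v * N = vecMulVec a (vecMul v N) := by
  ext i j
  simp only [Matrix.mul_apply, vecMulVec_apply, Matrix.vecMul, dotProduct,
    Fintype.sum_sum_type, mul_add, Finset.mul_sum]
  refine congrArg₂ (· + ·) ?_ ?_ <;> exact Finset.sum_congr rfl fun k _ => by ring

lemma mat_mul_vecMulVec (N : Matrix (Fin g ⊕ Fin g) (Fin g ⊕ Fin g) R) (a v : Fin g ⊕ Fin g → R) :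
    N * vecMulVec a v = vecMulVec (N.mulVec a) v := by
  ext i j
  simp only [Matrix.mul_apply, vecMulVec_apply, Matrix.mulVec, dotProduct, Finset.sum_mul]
  exact Finset.sum_congr rfl fun k _ => by ring

lemma vecMulVec_transpose' (a v : Fin g ⊕ Fin g → R) :
    (vecMulVec a v)ᵀ = vecMulVec v a := by
  ext i j; simp [vecMulVec, mul_comm]

lemma vecMul_smulMat (x : Fin g ⊕ Fin g → R) (t : R)
    (A : Matrix (Fin g ⊕ Fin g) (Fin g ⊕ Fin g) R) :
    vecMul x (t • A) = t • vecMul x A := by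
  funext j
  simp only [Matrix.vecMul, dotProduct, Matrix.smul_apply, Pi.smul_apply, smul_eq_mul,
    Finset.mul_sum]
  exact Finset.sum_congr rfl fun k _ => by ring

lemma vecMulVec_mul_vecMulVec (a b c d : Fin g ⊕ Fin g → R) :
    vecMulVec a b * vecMulVec c d = (b ⬝ᵥ c) • vecMulVec a d := by
  ext i j
  simp only [Matrix.mul_apply, vecMulVec_apply, Matrix.smul_apply, dotProduct, smul_eq_mul,
    Finset.sum_mul]
  exact Finset.sum_congr rfl fun k _ => by ring

lemma vecMul_T (x v : Fin g ⊕ Fin g → R) (t : R) :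
    vecMul x (T v t) = x + (t * B x v) • v := by
  rw [T, vecMul_add, Matrix.vecMul_one, vecMul_smulMat, vecMul_vecMulVec, dot_Jv, smul_smul]

lemma T_fix {x v : Fin g ⊕ Fin g → R} (t : R) (h : B x v = 0) : vecMul x (T v t) = x := by
  rw [vecMul_T, h, mul_zero, zero_smul, add_zero]

lemma T_symp (v : Fin g ⊕ Fin g → R) (t : R) :
    T v t * Matrix.J (Fin g) R * (T v t)ᵀ = Matrix.J (Fin g) R := by
  have hvv : (v ⬝ᵥ Jv v) = 0 := by rw [dot_Jv, B_self]
  have e1 : vecMulVec (Jv v) v * Matrix.J (Fin g) R = -vecMulVec (Jv v) (Jv v) := by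
    rw [vecMulVec_mul_mat, vecMul_J]
    ext i j; simp [vecMulVec_apply]
  have e2 : Matrix.J (Fin g) R * vecMulVec v (Jv v) = vecMulVec (Jv v) (Jv v) := by
    rw [mat_mul_vecMulVec, J_mulVec]
  have e3 : vecMulVec (Jv v) v * Matrix.J (Fin g) R * vecMulVec v (Jv v) = 0 := by
    rw [e1, Matrix.neg_mul, vecMulVec_mul_vecMulVec, dotProduct_comm, hvv, zero_smul, neg_zero]
  rw [T, transpose_add, transpose_one, transpose_smul, vecMulVec_transpose']
  simp only [Matrix.add_mul, Matrix.mul_add, Matrix.one_mul, Matrix.mul_one,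
    Matrix.smul_mul, Matrix.mul_smul]
  rw [e1, e2, Matrix.neg_mul, vecMulVec_mul_vecMulVec, dotProduct_comm, hvv, zero_smul,
    neg_zero, smul_zero, add_zero]
  simp [smul_neg]

lemma T_mul_T_neg (v : Fin g ⊕ Fin g → R) (t : R) : T v t * T v (-t) = 1 := by
  have hPP : vecMulVec (Jv v) v * vecMulVec (Jv v) v = 0 := by
    rw [vecMulVec_mul_vecMulVec, dot_Jv, B_self, zero_smul]
  rw [T, T]
  simp only [Matrix.add_mul, Matrix.mul_add, Matrix.one_mul, Matrix.mul_one,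
    Matrix.smul_mul, Matrix.mul_smul]
  rw [hPP]
  simp

/-- product of a list of transvection data -/
def Tprod (l : List ((Fin g ⊕ Fin g → R) × R)) : Matrix (Fin g ⊕ Fin g) (Fin g ⊕ Fin g) R :=
  (l.map fun p => T p.1 p.2).prod

@[simp] lemma Tprod_nil : Tprod ([] : List ((Fin g ⊕ Fin g → R) × R)) = 1 := rfl

lemma Tprod_cons (p : (Fin g ⊕ Fin g → R) × R) (l : List ((Fin g ⊕ Fin g → R) × R)) :
    Tprod (p :: l) = T p.1 p.2 * Tprod l := by
  simp [Tprod]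

lemma Tprod_append (l₁ l₂ : List ((Fin g ⊕ Fin g → R) × R)) :
    Tprod (l₁ ++ l₂) = Tprod l₁ * Tprod l₂ := by
  simp [Tprod]

lemma symp_mul {A C : Matrix (Fin g ⊕ Fin g) (Fin g ⊕ Fin g) R}
    (hA : A * Matrix.J (Fin g) R * Aᵀ = Matrix.J (Fin g) R)
    (hC : C * Matrix.J (Fin g) R * Cᵀ = Matrix.J (Fin g) R) :
    (A * C) * Matrix.J (Fin g) R * (A * C)ᵀ = Matrix.J (Fin g) R := by
  rw [transpose_mul, show A * C * Matrix.J (Fin g) R * (Cᵀ * Aᵀ)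
      = A * (C * Matrix.J (Fin g) R * Cᵀ) * Aᵀ by noncomm_ring, hC, hA]

lemma Tprod_symp (l : List ((Fin g ⊕ Fin g → R) × R)) :
    Tprod l * Matrix.J (Fin g) R * (Tprod l)ᵀ = Matrix.J (Fin g) R := by
  induction l with
  | nil => simp
  | cons p l ih => rw [Tprod_cons]; exact symp_mul (T_symp p.1 p.2) ih

lemma Tprod_fix {x : Fin g ⊕ Fin g → R} {l : List ((Fin g ⊕ Fin g → R) × R)}
    (h : ∀ p ∈ l, B x p.1 = 0) : vecMul x (Tprod l) = x := by
  induction l with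
  | nil => simp
  | cons p l ih =>
      rw [Tprod_cons, ← Matrix.vecMul_vecMul, T_fix p.2 (h p (by simp))]
      exact ih fun q hq => h q (by simp [hq])

/-- reversed negated list gives a right inverse -/
def negRev (l : List ((Fin g ⊕ Fin g → R) × R)) : List ((Fin g ⊕ Fin g → R) × R) :=
  l.reverse.map fun p => (p.1, -p.2)

lemma Tprod_mul_negRev (l : List ((Fin g ⊕ Fin g → R) × R)) :
    Tprod l * Tprod (negRev l) = 1 := by
  induction l with
  | nil => simp [negRev]
  | cons p l ih =>
      have : negRev (p :: l) = negRev l ++ [(p.1, -p.2)] := by simp [negRev]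
      rw [this, Tprod_append, Tprod_cons, Matrix.mul_assoc,
        ← Matrix.mul_assoc (Tprod l), ih, Matrix.one_mul, Tprod_cons, Tprod_nil,
        Matrix.mul_one, T_mul_T_neg]

/-- rows of a product -/
lemma mul_row (M N : Matrix (Fin g ⊕ Fin g) (Fin g ⊕ Fin g) R) (i : Fin g ⊕ Fin g) :
    (M * N) i = vecMul (M i) N := by
  funext j
  simp [Matrix.mul_apply, Matrix.vecMul, dotProduct]

lemma rows_pairing {M : Matrix (Fin g ⊕ Fin g) (Fin g ⊕ Fin g) R}
    (hM : M * Matrix.J (Fin g) R * Mᵀ = Matrix.J (Fin g) R) (i j : Fin g ⊕ Fin g) :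
    B (M i) (M j) = Matrix.J (Fin g) R i j := by
  have h := congrFun (congrFun hM i) j
  rw [← h, Matrix.mul_assoc]
  rw [congrFun (mul_row M (Matrix.J (Fin g) R * Mᵀ) i) j, ← Matrix.vecMul_vecMul,
    vecMul_J (M i), Matrix.vecMul_transpose]
  show B (M i) (M j) = M j ⬝ᵥ (-Jv (M i))
  rw [dotProduct_neg, dot_Jv, B_skew]

section Maps
variable {S : Type*} [CommRing S] (φ : R →+* S)

lemma J_map : (Matrix.J (Fin g) R).map φ = Matrix.J (Fin g) S := by
  ext i j
  cases i <;> cases j <;>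
    simp [Matrix.J, Matrix.fromBlocks, Matrix.map_apply, Matrix.one_apply, apply_ite φ]

lemma map_symp {M : Matrix (Fin g ⊕ Fin g) (Fin g ⊕ Fin g) R}
    (hM : M * Matrix.J (Fin g) R * Mᵀ = Matrix.J (Fin g) R) :
    M.map φ * Matrix.J (Fin g) S * (M.map φ)ᵀ = Matrix.J (Fin g) S := by
  rw [← J_map φ, ← Matrix.transpose_map, ← Matrix.map_mul, ← Matrix.map_mul, hM]

lemma T_map (v : Fin g ⊕ Fin g → R) (t : R) :
    (T v t).map φ = T (φ ∘ v) (φ t) := by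
  ext i j
  simp only [T, Matrix.map_apply, Matrix.add_apply, Matrix.smul_apply, Matrix.one_apply,
    vecMulVec_apply, smul_eq_mul, _root_.map_add, _root_.map_mul, apply_ite φ,
    _root_.map_one, _root_.map_zero]
  congr 1
  cases i <;> simp [Jv, Function.comp, _root_.map_mul]

lemma Tprod_map (l : List ((Fin g ⊕ Fin g → R) × R)) :
    (Tprod l).map φ = Tprod (l.map fun p => (φ ∘ p.1, φ p.2)) := by
  induction l with
  | nil =>
      show (1 : Matrix (Fin g ⊕ Fin g) (Fin g ⊕ Fin g) R).map φ = 1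
      exact Matrix.map_one φ (map_zero φ) (map_one φ)
  | cons p l ih =>
      rw [Tprod_cons, Matrix.map_mul, ih, T_map]
      rw [show (List.map (fun p => (φ ∘ p.1, φ p.2)) (p :: l))
        = (φ ∘ p.1, φ p.2) :: List.map (fun p => (φ ∘ p.1, φ p.2)) l from rfl, Tprod_cons]

lemma Tprod_ones {l : List ((Fin g ⊕ Fin g → R) × R)} (h : ∀ p ∈ l, p.2 = 0) :
    Tprod l = 1 := by
  induction l with
  | nil => rfl
  | cons p l ih =>
      rw [Tprod_cons, h p (by simp), ih fun q hq => h q (by simp [hq])]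
      simp [T]

end Maps

/-- `ZMod (p^n)` has the "local" property we need. -/
lemma zmod_local {p n : ℕ} (hp : p.Prime) (hn : 0 < n) :
    ∀ a b : ZMod (p ^ n), IsUnit a → ¬IsUnit b → IsUnit (a + b) := by
  have hq : p ^ n ≠ 0 := pow_ne_zero _ hp.pos.ne'
  haveI : NeZero (p ^ n) := ⟨hq⟩
  have key : ∀ x : ZMod (p ^ n), ¬IsUnit x ↔ p ∣ x.val := by
    intro x
    rw [← ZMod.natCast_zmod_val x, ZMod.isUnit_iff_coprime, ZMod.val_natCast,
      Nat.coprime_pow_right_iff hn, Nat.coprime_comm, hp.coprime_iff_not_dvd, not_not,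
      Nat.dvd_mod_iff (dvd_pow_self p hn.ne')]
  intro a b ha hb
  by_contra hab
  rw [key] at hab hb
  have : p ∣ a.val := by
    have hsum : p ∣ a.val + b.val := by
      have := ZMod.val_add a b
      rw [← Nat.dvd_mod_iff (dvd_pow_self p hn.ne'), ← this]
      exact hab
    exact (Nat.dvd_add_iff_left hb).mpr hsum
  exact (key a).mpr this ha

/-- a single transvection moving `u` to `v` when the pairing is a unit -/
lemma move_one {u v : Fin g ⊕ Fin g → R} (h : IsUnit (B u v)) :
    ∃ t : R, vecMul u (T (v - u) t) = v := by
  obtain ⟨c, hc⟩ := h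
  refine ⟨(↑c⁻¹ : R), ?_⟩
  rw [vecMul_T, B_sub_right, B_self, sub_zero, ← hc, Units.inv_mul, one_smul]
  abel

def Fixed (m : ℕ) (M : Matrix (Fin g ⊕ Fin g) (Fin g ⊕ Fin g) R) : Prop :=
  ∀ k : Fin g, (k : ℕ) < m → M (Sum.inl k) = E (Sum.inl k) ∧ M (Sum.inr k) = E (Sum.inr k)

def Csupp (m : ℕ) (x : Fin g ⊕ Fin g → R) : Prop :=
  ∀ k : Fin g, (k : ℕ) < m → x (Sum.inl k) = 0 ∧ x (Sum.inr k) = 0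

lemma Csupp.sub {m : ℕ} {x y : Fin g ⊕ Fin g → R} (hx : Csupp m x) (hy : Csupp m y) :
    Csupp m (x - y) := fun k hk => by
  obtain ⟨a1, a2⟩ := hx k hk; obtain ⟨b1, b2⟩ := hy k hk
  constructor <;> simp [a1, a2, b1, b2]

lemma Csupp.add {m : ℕ} {x y : Fin g ⊕ Fin g → R} (hx : Csupp m x) (hy : Csupp m y) :
    Csupp m (x + y) := fun k hk => by
  obtain ⟨a1, a2⟩ := hx k hk; obtain ⟨b1, b2⟩ := hy k hk
  constructor <;> simp [a1, a2, b1, b2]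

lemma Csupp_E_inl {m : ℕ} {i : Fin g} (h : m ≤ (i : ℕ)) :
    Csupp m (E (Sum.inl i) : Fin g ⊕ Fin g → R) := fun k hk => by
  constructor <;> simp only [E] <;> rw [if_neg] <;> intro hc <;>
    simp_all <;> omega

lemma Csupp_E_inr {m : ℕ} {i : Fin g} (h : m ≤ (i : ℕ)) :
    Csupp m (E (Sum.inr i) : Fin g ⊕ Fin g → R) := fun k hk => by
  constructor <;> simp only [E] <;> rw [if_neg] <;> intro hc <;>
    simp_all <;> omega

lemma B_E_zero_of_Csupp {m : ℕ} {x : Fin g ⊕ Fin g → R} (hx : Csupp m x) {k : Fin g}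
    (hk : (k : ℕ) < m) : B (E (Sum.inl k)) x = 0 ∧ B (E (Sum.inr k)) x = 0 := by
  obtain ⟨a1, a2⟩ := hx k hk
  rw [B_E_inl_left, B_E_inr_left, a1, a2, neg_zero]
  exact ⟨rfl, rfl⟩

/-- rows outside the fixed block have support outside the fixed block -/
lemma row_supp {m : ℕ} {M : Matrix (Fin g ⊕ Fin g) (Fin g ⊕ Fin g) R}
    (hM : M * Matrix.J (Fin g) R * Mᵀ = Matrix.J (Fin g) R) (hfix : Fixed m M)
    {i : Fin g ⊕ Fin g} (hi : ∀ k : Fin g, (k : ℕ) < m → i ≠ Sum.inl k ∧ i ≠ Sum.inr k) :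
    Csupp m (M i) := by
  intro k hk
  obtain ⟨h1, h2⟩ := hfix k hk
  have e1 := rows_pairing hM i (Sum.inl k)
  rw [h1, B_E_inl_right] at e1
  have e2 := rows_pairing hM i (Sum.inr k)
  rw [h2, B_E_inr_right] at e2
  obtain ⟨hi1, hi2⟩ := hi k hk
  constructor
  · rw [← neg_neg (M i (Sum.inl k)), e2]
    cases i with
    | inl a => rw [J_apply_inl_inr, if_neg (by rintro rfl; exact hi1 rfl)]; ring
    | inr a => rw [J_apply_inr_inr]; ring
  · rw [e1]
    cases i with
    | inl a => rw [J_apply_inl_inl]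
    | inr a => rw [J_apply_inr_inl, if_neg (by rintro rfl; exact hi2 rfl)]

lemma step (hloc : ∀ a b : R, IsUnit a → ¬IsUnit b → IsUnit (a + b)) :
    ∀ d : ℕ, ∀ M : Matrix (Fin g ⊕ Fin g) (Fin g ⊕ Fin g) R,
      M * Matrix.J (Fin g) R * Mᵀ = Matrix.J (Fin g) R → Fixed (g - d) M →
      ∃ l, M * Tprod l = 1 := by
  intro d
  induction d with
  | zero =>
      intro M hM hfix
      refine ⟨[], ?_⟩
      rw [Tprod_nil, Matrix.mul_one]
      ext i j
      have : M i = E i := by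
        cases i with
        | inl k => exact (hfix k (by simpa using k.isLt)).1
        | inr k => exact (hfix k (by simpa using k.isLt)).2
      rw [this]
      simp [E, Matrix.one_apply]
  | succ d ih =>
      intro M hM hfix
      by_cases hd : g ≤ d
      · exact ih M hM (fun k hk => absurd hk (by omega))
      push_neg at hd
      set m : ℕ := g - (d + 1) with hmdef
      have hmg : m < g := by omega
      set mf : Fin g := ⟨m, hmg⟩ with hmf
      have hmfv : (mf : ℕ) = m := rfl
      have hfixm : Fixed m M := hfix
      set u := M (Sum.inl mf) with hu
      set w := M (Sum.inr mf) with hw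
      set e : Fin g ⊕ Fin g → R := E (Sum.inl mf) with he
      set f : Fin g ⊕ Fin g → R := E (Sum.inr mf) with hf
      have hnotfix : ∀ i : Fin g ⊕ Fin g, (i = Sum.inl mf ∨ i = Sum.inr mf) →
          ∀ k : Fin g, (k : ℕ) < m → i ≠ Sum.inl k ∧ i ≠ Sum.inr k := by
        rintro i (rfl | rfl) k hk
        · refine ⟨fun h => ?_, fun h => by cases h⟩
          injection h with h2
          rw [← h2, hmfv] at hk
          omega
        · refine ⟨fun h => (by cases h), fun h => ?_⟩
          injection h with h2
          rw [← h2, hmfv] at hk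
          omega
      have hCu : Csupp m u := row_supp hM hfixm (hnotfix _ (Or.inl rfl))
      have hCw : Csupp m w := row_supp hM hfixm (hnotfix _ (Or.inr rfl))
      have hCe : Csupp m e := Csupp_E_inl (le_of_eq hmfv.symm)
      have hCf : Csupp m f := Csupp_E_inr (le_of_eq hmfv.symm)
      have hBuw : B u w = -1 := by
        rw [hu, hw, rows_pairing hM, J_apply_inl_inr, if_pos rfl]
      have hBfe : B f e = 1 := by
        rw [he, hf, B_E_inr_left, E, if_pos rfl]
      have hBef : B e f = -1 := by rw [B_skew, hBfe]
      -- step 1 : move `u` to `e`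
      have step1 : ∃ l₁, vecMul u (Tprod l₁) = e ∧ ∀ p ∈ l₁, Csupp m p.1 := by
        by_cases h1 : IsUnit (B u e)
        · obtain ⟨t, ht⟩ := move_one h1
          refine ⟨[(e - u, t)], ?_, ?_⟩
          · rw [Tprod_cons, Tprod_nil, Matrix.mul_one]; exact ht
          · rintro p hp
            simp only [List.mem_singleton] at hp
            subst hp
            exact hCe.sub hCu
        · have key : ∃ c, Csupp m c ∧ IsUnit (B u c) ∧ IsUnit (B c e) := by
            by_cases h2 : IsUnit (B w e)
            · exact ⟨w, hCw, by rw [hBuw]; exact isUnit_one.neg, h2⟩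
            · by_cases h3 : IsUnit (B u f)
              · exact ⟨f, hCf, h3, by rw [hBfe]; exact isUnit_one⟩
              · refine ⟨w + f, hCw.add hCf, ?_, ?_⟩
                · rw [B_add_right, hBuw]
                  exact hloc _ _ isUnit_one.neg h3
                · rw [B_add_left, hBfe, add_comm]
                  exact hloc _ _ isUnit_one h2
          obtain ⟨c, hCc, hu1, hu2⟩ := key
          obtain ⟨t1, ht1⟩ := move_one hu1
          obtain ⟨t2, ht2⟩ := move_one hu2
          refine ⟨[(c - u, t1), (e - c, t2)], ?_, ?_⟩
          · rw [Tprod_cons, Tprod_cons, Tprod_nil, Matrix.mul_one, ← Matrix.vecMul_vecMul,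
              ht1, ht2]
          · rintro p hp
            simp only [List.mem_cons, List.mem_singleton] at hp
            rcases hp with rfl | rfl | h
            · exact hCc.sub hCu
            · exact hCe.sub hCc
            · exact absurd h List.not_mem_nil
      obtain ⟨l₁, hl₁, hl₁C⟩ := step1
      set M₁ := M * Tprod l₁ with hM₁def
      have hM₁ : M₁ * Matrix.J (Fin g) R * M₁ᵀ = Matrix.J (Fin g) R :=
        symp_mul hM (Tprod_symp l₁)
      have hM₁fix : Fixed m M₁ := by
        intro k hk
        obtain ⟨h1, h2⟩ := hfixm k hk
        rw [hM₁def]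
        constructor
        · rw [mul_row, h1, Tprod_fix fun p hp => (B_E_zero_of_Csupp (hl₁C p hp) hk).1]
        · rw [mul_row, h2, Tprod_fix fun p hp => (B_E_zero_of_Csupp (hl₁C p hp) hk).2]
      have hrow1 : M₁ (Sum.inl mf) = e := by
        rw [hM₁def, mul_row, ← hu, hl₁]
      set w' := M₁ (Sum.inr mf) with hw'
      have hCw' : Csupp m w' := row_supp hM₁ hM₁fix (hnotfix _ (Or.inr rfl))
      have hBew' : B e w' = -1 := by
        rw [← hrow1, hw', rows_pairing hM₁, J_apply_inl_inr, if_pos rfl]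
      have hBw'e : B w' e = 1 := by rw [B_skew, hBew']; ring
      -- step 2 : move `w'` to `f` fixing `e`
      have step2 : ∃ l₂, vecMul w' (Tprod l₂) = f ∧
          ∀ p ∈ l₂, Csupp m p.1 ∧ B e p.1 = 0 := by
        by_cases h4 : IsUnit (B w' f)
        · obtain ⟨t, ht⟩ := move_one h4
          refine ⟨[(f - w', t)], ?_, ?_⟩
          · rw [Tprod_cons, Tprod_nil, Matrix.mul_one]; exact ht
          · rintro p hp
            simp only [List.mem_singleton] at hp
            subst hp
            exact ⟨hCf.sub hCw', by rw [B_sub_right, hBef, hBew']; ring⟩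
        · have hu1 : IsUnit (B w' (f + e)) := by
            rw [B_add_right, add_comm]
            exact hloc _ _ (by rw [hBw'e]; exact isUnit_one) h4
          have hu2 : IsUnit (B (f + e) f) := by
            rw [B_add_left, B_self, hBef, zero_add]
            exact isUnit_one.neg
          obtain ⟨t1, ht1⟩ := move_one hu1
          obtain ⟨t2, ht2⟩ := move_one hu2
          refine ⟨[((f + e) - w', t1), (f - (f + e), t2)], ?_, ?_⟩
          · rw [Tprod_cons, Tprod_cons, Tprod_nil, Matrix.mul_one, ← Matrix.vecMul_vecMul,
              ht1, ht2]
          · rintro p hp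
            simp only [List.mem_cons, List.mem_singleton] at hp
            rcases hp with rfl | rfl | h
            · refine ⟨(hCf.add hCe).sub hCw', ?_⟩
              rw [B_sub_right, B_add_right, hBef, B_self, hBew']; ring
            · refine ⟨hCf.sub (hCf.add hCe), ?_⟩
              rw [B_sub_right, B_add_right, hBef, B_self]; ring
            · exact absurd h List.not_mem_nil
      obtain ⟨l₂, hl₂, hl₂C⟩ := step2
      set M₂ := M₁ * Tprod l₂ with hM₂def
      have hM₂ : M₂ * Matrix.J (Fin g) R * M₂ᵀ = Matrix.J (Fin g) R :=
        symp_mul hM₁ (Tprod_symp l₂)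
      have hM₂fix : Fixed (m + 1) M₂ := by
        intro k hk
        by_cases hkm : (k : ℕ) < m
        · obtain ⟨h1, h2⟩ := hM₁fix k hkm
          rw [hM₂def]
          constructor
          · rw [mul_row, h1, Tprod_fix fun p hp => (B_E_zero_of_Csupp (hl₂C p hp).1 hkm).1]
          · rw [mul_row, h2, Tprod_fix fun p hp => (B_E_zero_of_Csupp (hl₂C p hp).1 hkm).2]
        · have hkeq : k = mf := by
            apply Fin.ext
            simp only [hmf]
            omega
          subst hkeq
          rw [hM₂def]
          constructor
          · rw [mul_row, hrow1, Tprod_fix fun p hp => (hl₂C p hp).2]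
          · rw [mul_row, ← hw', hl₂]
      have hgd : g - d = m + 1 := by omega
      obtain ⟨l₃, hl₃⟩ := ih M₂ hM₂ (by rw [hgd]; exact hM₂fix)
      refine ⟨l₁ ++ (l₂ ++ l₃), ?_⟩
      rw [Tprod_append, Tprod_append, ← Matrix.mul_assoc, ← hM₁def, ← Matrix.mul_assoc,
        ← hM₂def]
      exact hl₃

theorem gen (hloc : ∀ a b : R, IsUnit a → ¬IsUnit b → IsUnit (a + b))
    (M : Matrix (Fin g ⊕ Fin g) (Fin g ⊕ Fin g) R)
    (hM : M * Matrix.J (Fin g) R * Mᵀ = Matrix.J (Fin g) R) :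
    ∃ l, M * Tprod l = 1 :=
  step hloc g M hM (by simp only [Nat.sub_self]; exact fun k hk => absurd hk (by omega))

section IntHelpers
variable (S : Type*) [CommRing S]

lemma map_int_mul (Ma Mb : Matrix (Fin g ⊕ Fin g) (Fin g ⊕ Fin g) ℤ) :
    (Ma * Mb).map (Int.cast : ℤ → S) = Ma.map (Int.cast : ℤ → S) * Mb.map (Int.cast : ℤ → S) :=
  Matrix.map_mul (f := Int.castRingHom S)

lemma Tprod_map_int (l : List ((Fin g ⊕ Fin g → ℤ) × ℤ)) :
    (Tprod l).map (Int.cast : ℤ → S)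
      = Tprod (l.map fun p => ((Int.cast : ℤ → S) ∘ p.1, (p.2 : S))) :=
  Tprod_map (Int.castRingHom S) l

lemma map_symp_int {M : Matrix (Fin g ⊕ Fin g) (Fin g ⊕ Fin g) ℤ}
    (hM : M * Matrix.J (Fin g) ℤ * Mᵀ = Matrix.J (Fin g) ℤ) :
    M.map (Int.cast : ℤ → S) * Matrix.J (Fin g) S * (M.map (Int.cast : ℤ → S))ᵀ
      = Matrix.J (Fin g) S :=
  map_symp (Int.castRingHom S) hM

end IntHelpers

/-- matrix maps to `ZMod` compose along divisibility -/
lemma map_cast_compose {q n : ℕ} (h : q ∣ n) (M : Matrix (Fin g ⊕ Fin g) (Fin g ⊕ Fin g) ℤ) :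
    M.map (Int.cast : ℤ → ZMod q) = (M.map (Int.cast : ℤ → ZMod n)).map
      (ZMod.castHom h (ZMod q)) := by
  ext i j
  simp only [Matrix.map_apply]
  rw [map_intCast]

lemma entry_glue {q s : ℕ} (hco : q.Coprime s) {x : ℤ} {y : ZMod (q * s)}
    (h1 : (x : ZMod q) = ZMod.castHom (dvd_mul_right q s) (ZMod q) y)
    (h2 : (x : ZMod s) = ZMod.castHom (dvd_mul_left s q) (ZMod s) y) :
    (x : ZMod (q * s)) = y := by
  obtain ⟨z, rfl⟩ := ZMod.intCast_surjective y
  rw [map_intCast] at h1 h2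
  rw [← sub_eq_zero, ← Int.cast_sub, ZMod.intCast_zmod_eq_zero_iff_dvd]
  have d1 : (q : ℤ) ∣ x - z := by
    rwa [← ZMod.intCast_zmod_eq_zero_iff_dvd, Int.cast_sub, sub_eq_zero]
  have d2 : (s : ℤ) ∣ x - z := by
    rwa [← ZMod.intCast_zmod_eq_zero_iff_dvd, Int.cast_sub, sub_eq_zero]
  have : IsCoprime (q : ℤ) (s : ℤ) := Nat.isCoprime_iff_coprime.mpr hco
  push_cast
  exact this.mul_dvd d1 d2

/-- main lifting statement, with an auxiliary congruence condition -/
theorem lift_cong : ∀ r : ℕ, 0 < r → ∀ a : ℕ, Nat.Coprime r a →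
    ∀ M' : Matrix (Fin g ⊕ Fin g) (Fin g ⊕ Fin g) (ZMod r),
    M' * Matrix.J (Fin g) (ZMod r) * M'ᵀ = Matrix.J (Fin g) (ZMod r) →
    ∃ M : Matrix (Fin g ⊕ Fin g) (Fin g ⊕ Fin g) ℤ,
      M * Matrix.J (Fin g) ℤ * Mᵀ = Matrix.J (Fin g) ℤ ∧
      M.map (Int.cast : ℤ → ZMod r) = M' ∧
      M.map (Int.cast : ℤ → ZMod a) = 1 := by
  intro r
  induction r using Nat.recOnPosPrimePosCoprime with
  | prime_pow p n hp hn =>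
      intro _ a hco M' hM'
      haveI : NeZero (p ^ n) := ⟨pow_ne_zero _ hp.pos.ne'⟩
      obtain ⟨l, hl⟩ := gen (zmod_local hp hn) M' hM'
      have hM'eq : M' = Tprod (negRev l) := by
        calc M' = M' * (Tprod l * Tprod (negRev l)) := by rw [Tprod_mul_negRev, Matrix.mul_one]
        _ = (M' * Tprod l) * Tprod (negRev l) := by rw [Matrix.mul_assoc]
        _ = Tprod (negRev l) := by rw [hl, Matrix.one_mul]
      -- lift each transvection
      have hau : IsUnit ((a : ZMod (p ^ n))) := by
        rw [ZMod.isUnit_iff_coprime]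
        exact hco.symm
      obtain ⟨ua, hua⟩ := hau
      -- integer lift of one datum
      set lift : ((Fin g ⊕ Fin g → ZMod (p ^ n)) × ZMod (p ^ n)) →
          ((Fin g ⊕ Fin g → ℤ) × ℤ) :=
        fun pr => (fun j => (ZMod.cast (pr.1 j) : ℤ), (a : ℤ) * (ZMod.cast ((↑ua⁻¹ : ZMod (p^n)) * pr.2) : ℤ))
        with hlift
      refine ⟨Tprod ((negRev l).map lift), Tprod_symp _, ?_, ?_⟩
      · rw [Tprod_map_int, hM'eq, List.map_map]
        refine congrArg Tprod ((List.map_congr_left fun pr _ => ?_).trans (List.map_id _))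
        show _ = pr
        ext1
        · funext j
          exact ZMod.intCast_rightInverse (pr.1 j)
        · show (((a : ℤ) * (ZMod.cast ((↑ua⁻¹ : ZMod (p^n)) * pr.2) : ℤ) : ℤ) : ZMod (p^n)) = pr.2
          push_cast
          rw [← hua, ← mul_assoc, Units.mul_inv, one_mul]
      · rw [Tprod_map_int]
        refine Tprod_ones fun pr hpr => ?_
        simp only [List.mem_map] at hpr
        obtain ⟨x, hx, rfl⟩ := hpr
        obtain ⟨pr0, _, rfl⟩ := hx
        simp only [hlift]
        push_cast
        rw [ZMod.natCast_self]
        ring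
  | zero => intro h; exact absurd h (by omega)
  | one =>
      intro _ a _ M' hM'
      refine ⟨1, by simp, ?_, ?_⟩
      · apply Subsingleton.elim
      · exact Matrix.map_one _ (Int.cast_zero) (Int.cast_one)
  | coprime q s hq1 hs1 hqs ihq ihs =>
      intro _ a hco M' hM'
      have hq0 : 0 < q := by omega
      have hs0 : 0 < s := by omega
      set πq := ZMod.castHom (dvd_mul_right q s) (ZMod q) with hπq
      set πs := ZMod.castHom (dvd_mul_left s q) (ZMod s) with hπs
      have hcoq : Nat.Coprime q (a * s) :=
        Nat.Coprime.mul_right (hco.coprime_dvd_left (dvd_mul_right q s)) hqs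
      obtain ⟨M₁, hM₁symp, hM₁q, hM₁as⟩ := ihq hq0 (a * s) hcoq (M'.map πq) (map_symp πq hM')
      -- the reduction of M₁ mod q*s
      set A := M₁.map (Int.cast : ℤ → ZMod (q * s)) with hA
      have hAsymp : A * Matrix.J (Fin g) (ZMod (q * s)) * Aᵀ = Matrix.J (Fin g) (ZMod (q * s)) :=
        map_symp_int _ hM₁symp
      -- N' = A⁻¹ * M' inside the symplectic group
      set Asp : Matrix.symplecticGroup (Fin g) (ZMod (q * s)) :=
        ⟨A, SymplecticGroup.mem_iff.mpr hAsymp⟩ with hAsp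
      set M'sp : Matrix.symplecticGroup (Fin g) (ZMod (q * s)) :=
        ⟨M', SymplecticGroup.mem_iff.mpr hM'⟩ with hM'sp
      set N' : Matrix (Fin g ⊕ Fin g) (Fin g ⊕ Fin g) (ZMod (q * s)) := ↑(Asp⁻¹ * M'sp)
        with hN'
      have hN'symp : N' * Matrix.J (Fin g) (ZMod (q * s)) * N'ᵀ = Matrix.J (Fin g) (ZMod (q * s)) :=
        SymplecticGroup.mem_iff.mp (Asp⁻¹ * M'sp).2
      have hAN' : A * N' = M' := by
        have : Asp * (Asp⁻¹ * M'sp) = M'sp := by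
          rw [← mul_assoc, mul_inv_cancel, one_mul]
        calc A * N' = ↑(Asp * (Asp⁻¹ * M'sp)) := rfl
        _ = M' := by rw [this]
      -- N' ≡ 1 mod s reduces to `M'.map πs`
      have hAs : A.map πs = 1 := by
        rw [hA, hπs, ← map_cast_compose (dvd_mul_left s q)]
        rw [show M₁.map (Int.cast : ℤ → ZMod s)
            = (M₁.map (Int.cast : ℤ → ZMod (a * s))).map (ZMod.castHom (dvd_mul_left s a) (ZMod s))
          from map_cast_compose (dvd_mul_left s a) M₁, hM₁as]
        exact Matrix.map_one _ (map_zero _) (map_one _)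
      have hN's : N'.map πs = M'.map πs := by
        have hcoeinv : (↑(Asp⁻¹) : Matrix (Fin g ⊕ Fin g) (Fin g ⊕ Fin g) (ZMod (q * s)))
            = (-Matrix.J (Fin g) (ZMod (q * s))) * Aᵀ * Matrix.J (Fin g) (ZMod (q * s)) :=
          SymplecticGroup.coe_inv Asp
        have hnegJ : (-Matrix.J (Fin g) (ZMod (q * s))).map πs = -Matrix.J (Fin g) (ZMod s) := by
          rw [show (-Matrix.J (Fin g) (ZMod (q * s))).map πs
              = -((Matrix.J (Fin g) (ZMod (q * s))).map πs) from by
            ext i j; simp only [Matrix.map_apply, Matrix.neg_apply, map_neg], J_map]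
        have hAinvs : (↑(Asp⁻¹) : Matrix (Fin g ⊕ Fin g) (Fin g ⊕ Fin g) (ZMod (q * s))).map πs
            = 1 := by
          rw [hcoeinv, Matrix.map_mul, Matrix.map_mul, hnegJ, J_map, Matrix.transpose_map, hAs,
            Matrix.transpose_one, Matrix.mul_one, Matrix.neg_mul, Matrix.J_squared, neg_neg]
        have hsplit : N' = (↑(Asp⁻¹) : Matrix (Fin g ⊕ Fin g) (Fin g ⊕ Fin g) (ZMod (q * s))) * M' := by
          rw [hN', Submonoid.coe_mul, hM'sp]
        rw [hsplit, Matrix.map_mul, hAinvs, Matrix.one_mul]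
      have hcos : Nat.Coprime s (a * q) :=
        Nat.Coprime.mul_right (hco.coprime_dvd_left (dvd_mul_left s q)) hqs.symm
      obtain ⟨M₂, hM₂symp, hM₂s, hM₂aq⟩ := ihs hs0 (a * q) hcos (N'.map πs)
        (map_symp πs hN'symp)
      refine ⟨M₁ * M₂, symp_mul hM₁symp hM₂symp, ?_, ?_⟩
      · -- reduction mod q*s equals M'
        have hq_side : (M₁ * M₂).map (Int.cast : ℤ → ZMod q) = M'.map πq := by
          rw [map_int_mul, hM₁q]
          have : M₂.map (Int.cast : ℤ → ZMod q) = 1 := by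
            rw [show M₂.map (Int.cast : ℤ → ZMod q)
                = (M₂.map (Int.cast : ℤ → ZMod (a * q))).map (ZMod.castHom (dvd_mul_left q a) (ZMod q))
              from map_cast_compose (dvd_mul_left q a) M₂, hM₂aq]
            exact Matrix.map_one _ (map_zero _) (map_one _)
          rw [this, Matrix.mul_one]
        have hs_side : (M₁ * M₂).map (Int.cast : ℤ → ZMod s) = M'.map πs := by
          rw [map_int_mul]
          have h1 : M₁.map (Int.cast : ℤ → ZMod s) = 1 := by
            rw [show M₁.map (Int.cast : ℤ → ZMod s)
                = (M₁.map (Int.cast : ℤ → ZMod (a * s))).map (ZMod.castHom (dvd_mul_left s a) (ZMod s))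
              from map_cast_compose (dvd_mul_left s a) M₁, hM₁as]
            exact Matrix.map_one _ (map_zero _) (map_one _)
          rw [h1, Matrix.one_mul, hM₂s, hN's]
        ext i j
        refine entry_glue hqs ?_ ?_
        · exact Matrix.ext_iff.mpr hq_side i j
        · exact Matrix.ext_iff.mpr hs_side i j
      · -- reduction mod a is 1
        have h1 : M₁.map (Int.cast : ℤ → ZMod a) = 1 := by
          rw [show M₁.map (Int.cast : ℤ → ZMod a)
              = (M₁.map (Int.cast : ℤ → ZMod (a * s))).map (ZMod.castHom (dvd_mul_right a s) (ZMod a))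
            from map_cast_compose (dvd_mul_right a s) M₁, hM₁as]
          exact Matrix.map_one _ (map_zero _) (map_one _)
        have h2 : M₂.map (Int.cast : ℤ → ZMod a) = 1 := by
          rw [show M₂.map (Int.cast : ℤ → ZMod a)
              = (M₂.map (Int.cast : ℤ → ZMod (a * q))).map (ZMod.castHom (dvd_mul_right a q) (ZMod a))
            from map_cast_compose (dvd_mul_right a q) M₂, hM₂aq]
          exact Matrix.map_one _ (map_zero _) (map_one _)
        rw [map_int_mul, h1, h2, Matrix.one_mul]


end Sp5

open Matrix
/-- Surjectivity of the reduction map `Sp_{2g}(ℤ) → Sp_{2g}(ℤ/r)`: every symplectic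
matrix over `ℤ/r` lifts to a symplectic matrix over `ℤ`. -/
theorem stmt5 (g r : ℕ) (hg : 0 < g) (hr : 0 < r)
    (M' : Matrix (Fin g ⊕ Fin g) (Fin g ⊕ Fin g) (ZMod r))
    (hM' : M' * Matrix.J (Fin g) (ZMod r) * M'ᵀ = Matrix.J (Fin g) (ZMod r)) :
    ∃ M : Matrix (Fin g ⊕ Fin g) (Fin g ⊕ Fin g) ℤ,
      M * Matrix.J (Fin g) ℤ * Mᵀ = Matrix.J (Fin g) ℤ ∧
      M.map (Int.cast : ℤ → ZMod r) = M' := by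
  obtain ⟨M, h1, h2, -⟩ := Sp5.lift_cong r hr 1 (Nat.coprime_one_right r) M' hM'
  exact ⟨M, h1, h2⟩
end

section
/- Let F be a totally real number field (a finite extension of ℚ all of whose embeddings into ℂ have image in ℝ). Then there exist nonzero elements a, b ∈ F such that there is exactly one real embedding σ : F → ℝ for which the quaternion algebra over ℝ with structure constants σ(a), σ(b) (the four-dimensional ℝ-algebra with basis 1, i, j, k, relations i² = σ(a), j² = σ(b), i·j = −j·i = k) is isomorphic as an ℝ-algebra to the algebra of 2×2 real matrices, while for every other real embedding σ' of F the quaternion algebra over ℝ with structure constants σ'(a), σ'(b) is not isomorphic to the 2×2 real matrix algebra. -/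
open Quaternion

lemma quat_pos_re {s t : ℝ} (hs : s < 0) (ht : t < 0) (a : ℍ[ℝ,s,t]) (ha : a ≠ 0) :
    0 < (star a * a).re := by
  have h4 : a.1 ≠ 0 ∨ a.2 ≠ 0 ∨ a.3 ≠ 0 ∨ a.4 ≠ 0 := by
    by_contra h
    push_neg at h
    exact ha (by ext <;> simp [h.1, h.2.1, h.2.2.1, h.2.2.2])
  rw [QuaternionAlgebra.re_mul]
  simp only [QuaternionAlgebra.re_star, QuaternionAlgebra.imI_star, QuaternionAlgebra.imJ_star,
    QuaternionAlgebra.imK_star]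
  rcases h4 with h | h | h | h
  · nlinarith [mul_self_pos.2 h, mul_self_nonneg a.2, mul_self_nonneg a.3, mul_self_nonneg a.4,
      mul_pos (neg_pos.2 hs) (neg_pos.2 ht)]
  · nlinarith [mul_self_nonneg a.1, mul_self_pos.2 h, mul_self_nonneg a.3, mul_self_nonneg a.4,
      mul_pos (neg_pos.2 hs) (neg_pos.2 ht)]
  · nlinarith [mul_self_nonneg a.1, mul_self_nonneg a.2, mul_self_pos.2 h, mul_self_nonneg a.4,
      mul_pos (neg_pos.2 hs) (neg_pos.2 ht)]
  · nlinarith [mul_self_nonneg a.1, mul_self_nonneg a.2, mul_self_nonneg a.3, mul_self_pos.2 h,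
      mul_pos (neg_pos.2 hs) (neg_pos.2 ht)]

lemma quat_nonsplit {s t : ℝ} (hs : s < 0) (ht : t < 0) :
    IsEmpty (ℍ[ℝ,s,t] ≃ₐ[ℝ] Matrix (Fin 2) (Fin 2) ℝ) := by
  constructor
  intro e
  have hnzd : ∀ a b : ℍ[ℝ,s,t], a * b = 0 → a = 0 ∨ b = 0 := by
    intro a b hab
    by_cases ha : a = 0
    · exact Or.inl ha
    · right
      have h1 : star a * a * b = 0 := by rw [mul_assoc, hab, mul_zero]
      rw [QuaternionAlgebra.star_mul_eq_coe, QuaternionAlgebra.coe_mul_eq_smul] at h1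
      rcases smul_eq_zero.mp h1 with h | h
      · exact absurd h (ne_of_gt (quat_pos_re hs ht a ha))
      · exact h
  set M : Matrix (Fin 2) (Fin 2) ℝ := Matrix.single 0 0 1 with hM
  set N : Matrix (Fin 2) (Fin 2) ℝ := Matrix.single 1 1 1 with hN
  have hA : M ≠ 0 := by
    intro h
    have := congrFun (congrFun h 0) 0
    simp [hM, Matrix.single] at this
  have hB : N ≠ 0 := by
    intro h
    have := congrFun (congrFun h 1) 1
    simp [hN, Matrix.single] at this
  have hAB : M * N = 0 := by rw [hM, hN]; simp
  have h0 : e.symm M * e.symm N = 0 := by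
    rw [← map_mul, hAB, map_zero]
  rcases hnzd _ _ h0 with h | h
  · exact hA (by simpa using congrArg e h)
  · exact hB (by simpa using congrArg e h)


noncomputable def splitQBasis {s : ℝ} (hs : 0 < s) :
    QuaternionAlgebra.Basis (Matrix (Fin 2) (Fin 2) ℝ) s 0 s where
  i := !![Real.sqrt s, 0; 0, -Real.sqrt s]
  j := !![0, s; 1, 0]
  k := !![0, Real.sqrt s * s; -Real.sqrt s, 0]
  i_mul_i := by
    have hu : Real.sqrt s * Real.sqrt s = s := Real.mul_self_sqrt hs.le
    ext i j
    fin_cases i <;> fin_cases j <;>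
      simp [Matrix.mul_apply, Fin.sum_univ_two, Matrix.one_apply, hu]
  j_mul_j := by
    ext i j
    fin_cases i <;> fin_cases j <;>
      simp [Matrix.mul_apply, Fin.sum_univ_two, Matrix.one_apply]
  i_mul_j := by
    ext i j
    fin_cases i <;> fin_cases j <;>
      simp [Matrix.mul_apply, Fin.sum_univ_two]
  j_mul_i := by
    ext i j
    fin_cases i <;> fin_cases j <;>
      simp [Matrix.mul_apply, Fin.sum_univ_two, mul_comm]

lemma quat_split {s : ℝ} (hs : 0 < s) :
    Nonempty (ℍ[ℝ,s,s] ≃ₐ[ℝ] Matrix (Fin 2) (Fin 2) ℝ) := by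
  set u := Real.sqrt s with hu'
  have hu : u * u = s := Real.mul_self_sqrt hs.le
  have hu0 : 0 < u := Real.sqrt_pos.2 hs
  set φ := (splitQBasis hs).liftHom with hφ'
  have hφ : ∀ x : ℍ[ℝ,s,s], φ x =
      !![x.re + x.imI * u, x.imJ * s + x.imK * (u * s);
         x.imJ - x.imK * u, x.re - x.imI * u] := by
    intro x
    show (splitQBasis hs).lift x = _
    rw [QuaternionAlgebra.Basis.lift]
    ext i j
    fin_cases i <;> fin_cases j <;>
      simp [splitQBasis, Matrix.algebraMap_matrix_apply, Matrix.one_apply, hu'] <;> ring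
  have hinj : Function.Injective φ := by
    rw [injective_iff_map_eq_zero]
    intro x hx
    rw [hφ] at hx
    have h00 := congrFun (congrFun hx 0) 0
    have h01 := congrFun (congrFun hx 0) 1
    have h10 := congrFun (congrFun hx 1) 0
    have h11 := congrFun (congrFun hx 1) 1
    simp at h00 h01 h10 h11
    have h1 : x.re = 0 := by linarith
    have h2 : x.imI = 0 := by
      have : x.imI * u = 0 := by linarith
      rcases mul_eq_zero.mp this with h | h
      · exact h
      · exact absurd h hu0.ne'
    have h4 : x.imK = 0 := by
      have h5 : x.imJ = x.imK * u := by linarith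
      rw [h5] at h01
      have : x.imK * (u * s) = 0 := by nlinarith
      rcases mul_eq_zero.mp this with h | h
      · exact h
      · nlinarith
    have h3 : x.imJ = 0 := by rw [h4] at h10; simpa using h10
    ext <;> simp [h1, h2, h3, h4]
  have hsurj : Function.Surjective φ := by
    intro M
    refine ⟨⟨(M 0 0 + M 1 1) / 2, (M 0 0 - M 1 1) / (2 * u),
      (M 0 1 / s + M 1 0) / 2, (M 0 1 / s - M 1 0) / (2 * u)⟩, ?_⟩
    rw [hφ]
    ext i j
    fin_cases i <;> fin_cases j <;>
      (simp; try field_simp; try ring_nf)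
  exact ⟨AlgEquiv.ofBijective φ ⟨hinj, hsurj⟩⟩



/-- For a totally real number field `F`, there is a quaternion algebra over `F`
(given by structure constants `a, b ∈ F ∖ {0}`) which is split at exactly one real
embedding of `F` and non-split at all the others. -/
theorem stmt6 (F : Type*) [Field F] [NumberField F]
    (htotreal : ∀ σ : F →+* ℂ, ∀ x : F, (σ x).im = 0) :
    ∃ a b : F, a ≠ 0 ∧ b ≠ 0 ∧
      ∃! σ : F →+* ℝ,
        Nonempty (QuaternionAlgebra ℝ (σ a) 0 (σ b) ≃ₐ[ℝ] Matrix (Fin 2) (Fin 2) ℝ) := by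
  -- a complex embedding exists
  have hne : Nonempty (F →+* ℂ) := by
    rw [← Fintype.card_pos_iff, NumberField.Embeddings.card F ℂ]
    exact Module.finrank_pos
  obtain ⟨τ⟩ := hne
  -- build a real embedding
  let σ₀ : F →+* ℝ :=
    { toFun := fun x => (τ x).re
      map_one' := by simp
      map_zero' := by simp
      map_add' := fun x y => by simp
      map_mul' := fun x y => by simp [Complex.mul_re, htotreal τ] }
  -- finitely many real embeddings
  have hinj : Function.Injective (fun σ : F →+* ℝ => Complex.ofRealHom.comp σ) := by
    intro σ σ' h
    ext y
    exact Complex.ofReal_inj.mp (RingHom.congr_fun h y)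
  haveI : Finite (F →+* ℝ) := Finite.of_injective _ hinj
  haveI : Fintype (F →+* ℝ) := Fintype.ofFinite _
  haveI : DecidableEq (F →+* ℝ) := Classical.decEq _
  -- primitive element
  obtain ⟨x, hx⟩ := Field.exists_primitive_element ℚ F
  have hadj : Algebra.adjoin ℚ {x} = ⊤ := by
    have hint : IsIntegral ℚ x := Algebra.IsIntegral.isIntegral x
    have := IntermediateField.adjoin_simple_toSubalgebra_of_isAlgebraic hint.isAlgebraic
    rw [hx] at this
    rw [← this, IntermediateField.top_toSubalgebra]
  have hsep : ∀ σ σ' : F →+* ℝ, σ x = σ' x → σ = σ' := by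
    intro σ σ' h
    have h3 : Algebra.adjoin ℚ {x} ≤ AlgHom.equalizer σ.toRatAlgHom σ'.toRatAlgHom :=
      Algebra.adjoin_le (Set.singleton_subset_iff.2 (by exact h))
    ext y
    have hy : y ∈ AlgHom.equalizer σ.toRatAlgHom σ'.toRatAlgHom :=
      h3 (hadj ▸ Algebra.mem_top)
    exact hy
  -- separation constant
  set t₀ : ℝ := σ₀ x with ht₀
  obtain ⟨m, hm0, hm⟩ : ∃ m : ℝ, 0 < m ∧ ∀ σ : F →+* ℝ, σ ≠ σ₀ → m ≤ |σ x - t₀| := by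
    set S : Finset (F →+* ℝ) := Finset.univ.erase σ₀ with hS
    by_cases hSne : S.Nonempty
    · refine ⟨S.inf' hSne (fun σ => |σ x - t₀|), ?_, fun σ h => Finset.inf'_le _ ?_⟩
      · rw [Finset.lt_inf'_iff]
        intro σ hσ
        exact abs_pos.2 (sub_ne_zero.2 fun h =>
          (Finset.mem_erase.mp hσ).1 (hsep σ σ₀ h))
      · exact Finset.mem_erase.2 ⟨h, Finset.mem_univ _⟩
    · exact ⟨1, one_pos, fun σ h => absurd ⟨σ, Finset.mem_erase.2 ⟨h, Finset.mem_univ _⟩⟩ hSne⟩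
  obtain ⟨r, hr1, hr2⟩ := exists_rat_btwn (show t₀ - m / 4 < t₀ by linarith)
  have hrabs : |t₀ - (r : ℝ)| < m / 4 := by rw [abs_lt]; constructor <;> linarith
  obtain ⟨c, hc1, hc2⟩ := exists_rat_btwn (show (t₀ - (r : ℝ)) ^ 2 < m ^ 2 / 16 by
    nlinarith [abs_nonneg (t₀ - (r : ℝ)), sq_abs (t₀ - (r : ℝ))])
  set a : F := (c : F) - (x - (r : F)) ^ 2 with ha
  have key : ∀ σ : F →+* ℝ, σ a = (c : ℝ) - (σ x - (r : ℝ)) ^ 2 := by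
    intro σ
    rw [ha]
    rw [map_sub, map_pow, map_sub, map_ratCast, map_ratCast]
  have hpos : 0 < σ₀ a := by rw [key]; linarith
  have hneg : ∀ σ : F →+* ℝ, σ ≠ σ₀ → σ a < 0 := by
    intro σ hσ
    rw [key]
    have h1 : m ≤ |σ x - t₀| := hm σ hσ
    have h2 : (σ x - (r : ℝ)) ^ 2 > m ^ 2 / 16 := by
      rcases abs_cases (σ x - t₀) with ⟨he, _⟩ | ⟨he, _⟩ <;>
        rcases abs_cases (t₀ - (r : ℝ)) with ⟨he2, _⟩ | ⟨he2, _⟩ <;>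
          nlinarith [hm0, h1, hrabs]
    linarith
  have ha0 : a ≠ 0 := fun h => by simp [h] at hpos
  refine ⟨a, a, ha0, ha0, σ₀, quat_split hpos, fun σ hσ => ?_⟩
  by_contra hne
  exact (quat_nonsplit (hneg σ hne) (hneg σ hne)).false hσ.some
end
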